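/- For 0 < λ₁ < λ₀ and θ ∈ (0,1), the adaptive penalty weight λ*(x;θ,λ₀,λ₁) = λ₁·p*(x;θ,λ₀,λ₁) + λ₀·(1 - p*(x;θ,λ₀,λ₁)) satisfies λ₁ < λ*(x;θ,λ₀,λ₁) < λ₀ for all x, is a strictly decreasing function of |x|, and converges to λ₁ as |x| → ∞. -/

import Mathlib

/-- Laplace density ψ(x|λ) = (λ/2) exp(-λ|x|). -/
noncomputable def psi (lam x : ℝ) : ℝ := (lam / 2) * Real.exp (-lam * |x|)

/-- Conditional slab probability p*(x;θ,λ₀,λ₁). -/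
noncomputable def pstar (θ lam0 lam1 x : ℝ) : ℝ :=
  θ * psi lam1 x / ((1 - θ) * psi lam0 x + θ * psi lam1 x)

/-- Adaptive penalty weight λ*(x;θ,λ₀,λ₁). -/
noncomputable def lamstar (θ lam0 lam1 x : ℝ) : ℝ :=
  lam1 * pstar θ lam0 lam1 x + lam0 * (1 - pstar θ lam0 lam1 x)

/-!
Writing `O(x) = θ ψ(x|λ₁) / ((1 - θ) ψ(x|λ₀))` for the posterior odds of the slab, one has
`λ* = λ₁ + (λ₀ - λ₁) / (1 + O(x))`, and `O(x) = θλ₁ / ((1 - θ)λ₀) · exp ((λ₀ - λ₁)|x|)` is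
positive, strictly increasing in `|x|` and unbounded.
-/

open Real Filter Topology

noncomputable def slabOdds (θ lam0 lam1 x : ℝ) : ℝ :=
  θ * psi lam1 x / ((1 - θ) * psi lam0 x)

section
variable {θ lam0 lam1 : ℝ}

theorem slabOdds_eq (θ lam0 lam1 x : ℝ) :
    slabOdds θ lam0 lam1 x = θ * lam1 / ((1 - θ) * lam0) * exp ((lam0 - lam1) * |x|) := by
  rw [slabOdds, psi, psi, mul_div_mul_comm, mul_div_mul_comm (lam1 / 2),
    div_div_div_cancel_right₀ two_ne_zero, ← exp_sub, mul_div_mul_comm θ lam1, mul_assoc]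
  congr 3
  ring

theorem lamstar_eq (hθ0 : 0 < θ) (hθ1 : θ < 1) (h0 : 0 < lam0) (h1 : 0 < lam1) (x : ℝ) :
    lamstar θ lam0 lam1 x = lam1 + (lam0 - lam1) / (1 + slabOdds θ lam0 lam1 x) := by
  have : 0 < 1 - θ := sub_pos.2 hθ1
  have hψ0 : 0 < (1 - θ) * psi lam0 x := by unfold psi; positivity
  have hψ1 : 0 < θ * psi lam1 x := by unfold psi; positivity
  rw [lamstar, pstar, slabOdds]
  generalize (1 - θ) * psi lam0 x = a at hψ0 ⊢
  generalize θ * psi lam1 x = b at hψ1 ⊢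
  field_simp
  ring

theorem slabOdds_pos (hθ0 : 0 < θ) (hθ1 : θ < 1) (h0 : 0 < lam0) (h1 : 0 < lam1) (x : ℝ) :
    0 < slabOdds θ lam0 lam1 x := by
  have : 0 < 1 - θ := sub_pos.2 hθ1
  rw [slabOdds_eq]
  positivity

theorem slabOdds_lt_slabOdds (hθ0 : 0 < θ) (hθ1 : θ < 1) (h1 : 0 < lam1) (h01 : lam1 < lam0)
    {x y : ℝ} (hxy : |x| < |y|) : slabOdds θ lam0 lam1 x < slabOdds θ lam0 lam1 y := by
  have : 0 < 1 - θ := sub_pos.2 hθ1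
  have : 0 < lam0 := h1.trans h01
  rw [slabOdds_eq, slabOdds_eq]
  gcongr

theorem tendsto_slabOdds (hθ0 : 0 < θ) (hθ1 : θ < 1) (h1 : 0 < lam1) (h01 : lam1 < lam0) :
    Tendsto (slabOdds θ lam0 lam1) (comap (fun x : ℝ => |x|) atTop) atTop := by
  have : 0 < 1 - θ := sub_pos.2 hθ1
  have : 0 < lam0 := h1.trans h01
  simp_rw [funext (slabOdds_eq θ lam0 lam1)]
  refine Tendsto.const_mul_atTop (by positivity) (tendsto_exp_atTop.comp ?_)
  exact (tendsto_id.const_mul_atTop (sub_pos.2 h01)).comp tendsto_comap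

end

theorem lamstar_properties (θ lam0 lam1 : ℝ)
    (hθ : θ ∈ Set.Ioo (0 : ℝ) 1) (h1 : 0 < lam1) (h01 : lam1 < lam0) :
    (∀ x : ℝ, lam1 < lamstar θ lam0 lam1 x ∧ lamstar θ lam0 lam1 x < lam0) ∧
    (∀ x y : ℝ, |x| < |y| → lamstar θ lam0 lam1 y < lamstar θ lam0 lam1 x) ∧
    Filter.Tendsto (lamstar θ lam0 lam1)
      (Filter.comap (fun x : ℝ => |x|) Filter.atTop) (nhds lam1) := by
  obtain ⟨hθ0, hθ1⟩ := hθ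
  have h0 : 0 < lam0 := h1.trans h01
  have hd : 0 < lam0 - lam1 := sub_pos.2 h01
  have hodds := slabOdds_pos hθ0 hθ1 h0 h1
  have key := lamstar_eq hθ0 hθ1 h0 h1
  refine ⟨fun x => ?_, fun x y hxy => ?_, ?_⟩
  · have := hodds x
    rw [key]
    constructor
    · have : 0 < (lam0 - lam1) / (1 + slabOdds θ lam0 lam1 x) := by positivity
      linarith
    · have := div_lt_self hd (by linarith : 1 < 1 + slabOdds θ lam0 lam1 x)
      linarith
  · have := hodds x
    rw [key, key]
    gcongr
    exact slabOdds_lt_slabOdds hθ0 hθ1 h1 h01 hxy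
  · have hlim := (tendsto_atTop_add_const_left _ 1
      (tendsto_slabOdds hθ0 hθ1 h1 h01)).const_div_atTop (lam0 - lam1)
    simpa [← key] using hlim.const_add lam1
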